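/- For all integers p and q: if p is even then y_{p+2k,q} = y_{p,q−1}, and if p is odd then y_{p+2k,q} = y_{p,q+1}. Consequently, every element obtained from d by finitely many applications of the operations x ↦ x ▷ u and x ↦ x ▷⁻¹ u with u ∈ {a, b, c, d, e, f} lies in the set {y_{p,q} : 0 ≤ p ≤ 2k−1, 0 ≤ q ≤ m−1}; in particular, the orbit of d under the subgroup of permutations of Q generated by the point symmetries S_a, S_b, S_c, S_d, S_e, S_f has at most 2·k·m elements. -/

import Mathlib

/-- A quandle as in the paper: a set with operations `▷` and `▷⁻¹` satisfying
axioms A1, A2, A3. -/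
class PaperQuandle (Q : Type*) where
  rhd : Q → Q → Q
  rhdInv : Q → Q → Q
  fix : ∀ x : Q, rhd x x = x
  inv_rhd : ∀ x y : Q, rhdInv (rhd x y) y = x
  rhd_inv : ∀ x y : Q, rhd (rhdInv x y) y = x
  self_distrib : ∀ x y z : Q, rhd (rhd x y) z = rhd (rhd x z) (rhd y z)

infixl:65 " ▷ " => PaperQuandle.rhd
infixl:65 " ▷⁻¹ " => PaperQuandle.rhdInv

/-- The point symmetry at `u`, as a permutation of `Q`: `x ↦ x ▷ u`,
with inverse `x ↦ x ▷⁻¹ u`. -/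
def ptSym {Q : Type*} [PaperQuandle Q] (u : Q) : Equiv.Perm Q where
  toFun x := x ▷ u
  invFun x := x ▷⁻¹ u
  left_inv x := PaperQuandle.inv_rhd x u
  right_inv x := PaperQuandle.rhd_inv x u

/-- The element `y_{p,q} = d^{(ab)^t c^q}` if `p = 2t`, and
`d^{(ab)^t a c^q}` if `p = 2t+1`.  Here the word `ab` (apply `a`, then `b`)
is the permutation `ptSym b * ptSym a`. -/
def Y {Q : Type*} [PaperQuandle Q] (a b c d : Q) (p q : ℤ) : Q :=
  if Even p then
    (ptSym c ^ q) (((ptSym b * ptSym a) ^ (p / 2)) d)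
  else
    (ptSym c ^ q) ((((ptSym b * ptSym a) ^ ((p - 1) / 2)) d) ▷ a)

/-!
Write `Φ = S_b S_a` for the permutation of the word `ab`. The relations make `S_a, S_b, S_e, S_f`
involutions and give `S_d = S_e S_a = S_f S_b`, so both `S_a` and `S_b` invert `S_d` and `Φ`
commutes with `S_d`. The relation `c (ab)^k a e` then reads `S_c⁻¹ = S_d Φ^k`: hence `S_c`
commutes with `Φ` and `S_d`, is inverted by `S_a`, and `Φ^k = S_c⁻¹ S_d⁻¹`. As `S_d` fixes `d`,
this gives `y_{p+2k,q} = y_{p,q∓1}`, and with `S_c^m = 1` every `y_{p,q}` is some `y_{p',q'}`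
with `0 ≤ p' < 2k`, `0 ≤ q' < m`. The set of all `y_{p,q}` contains `d = y_{0,0}` and is
permuted by `S_a`, by the powers of `Φ`, by `S_c` and by `S_d` (which fixes each `y_{p,q}`), hence
by `S_b = Φ S_a`, `S_e = S_d S_a` and `S_f = S_d S_b`, so it contains the orbit of `d`.
-/

open Equiv MulAction Pointwise

section Group

variable {G : Type*} [Group G] {a c d w x y z : G} {k : ℤ}

theorem semiconjBy_mul_inv_of_mul_self (hx : x * x = 1) (hy : y * y = 1) :
    SemiconjBy x (y * x) (y * x)⁻¹ := by
  rw [SemiconjBy, mul_inv_rev, inv_eq_of_mul_eq_one_right hx, inv_eq_of_mul_eq_one_right hy,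
    mul_assoc]

theorem eq_mul_of_mul_mul_eq_one (hx : x * x = 1) (hy : y * y = 1) (h : x * y * z = 1) :
    z = y * x := by
  rw [eq_inv_of_mul_eq_one_right h, mul_inv_rev, inv_eq_of_mul_eq_one_right hx,
    inv_eq_of_mul_eq_one_right hy]

theorem commute_mul_of_semiconjBy_inv (hx : SemiconjBy x d d⁻¹) (hy : SemiconjBy y d d⁻¹) :
    Commute (y * x) d :=
  (by simpa using hy.inv_right : SemiconjBy y d⁻¹ d).mul_left hx

theorem commute_of_mul_zpow_mul_eq_one (h : d * w ^ k * c = 1) (hd : Commute x d)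
    (hw : Commute x w) : Commute x c := by
  rw [eq_inv_of_mul_eq_one_right h]
  exact (hd.mul_right (hw.zpow_right k)).inv_right

theorem semiconjBy_inv_of_mul_zpow_mul_eq_one (h : d * w ^ k * c = 1) (hwd : Commute w d)
    (had : SemiconjBy a d d⁻¹) (haw : SemiconjBy a w w⁻¹) : SemiconjBy a c c⁻¹ := by
  rw [eq_inv_of_mul_eq_one_right h]
  refine SemiconjBy.inv_right ?_
  have := had.mul_right (haw.zpow_right k)
  rwa [inv_zpow, ← ((hwd.zpow_left k).inv_inv).eq, ← mul_inv_rev] at this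

theorem zpow_mul_eq_of_mul_zpow_mul_eq_one (h : d * w ^ k * c = 1) (hcd : Commute c d) (j : ℤ) :
    w ^ (k * j) = c ^ (-j) * d ^ (-j) := by
  have hw : w ^ k = c⁻¹ * d⁻¹ := by
    rw [hcd.inv_inv.eq]
    exact eq_inv_mul_of_mul_eq (eq_inv_of_mul_eq_one_left h)
  rw [zpow_mul, hw, hcd.inv_inv.mul_zpow, inv_zpow', inv_zpow']

theorem dihedral_of_graph_relations {b e f : G} (ha : a * a = 1) (hb : b * b = 1)
    (he : e * e = 1) (hf : f * f = 1) (hdea : a * e * d = 1) (hbdf : f * d * b = 1)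
    (hcke : e * a * (b * a) ^ k * c = 1) :
    SemiconjBy a d d⁻¹ ∧ Commute d (b * a) ∧ Commute c (b * a) ∧ Commute c d ∧
      SemiconjBy a c c⁻¹ ∧ (∀ j, (b * a) ^ (k * j) = c ^ (-j) * d ^ (-j)) ∧
      e = d * a ∧ f = d * b := by
  have hd_ea := eq_mul_of_mul_mul_eq_one ha he hdea
  have hd_fb := eq_mul_of_mul_mul_eq_one hb hf (by rwa [mul_assoc, mul_eq_one_comm])
  have had : SemiconjBy a d d⁻¹ := hd_ea ▸ semiconjBy_mul_inv_of_mul_self ha he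
  have hdΦ := (commute_mul_of_semiconjBy_inv had
    (hd_fb ▸ semiconjBy_mul_inv_of_mul_self hb hf)).symm
  have hc : d * (b * a) ^ k * c = 1 := hd_ea ▸ hcke
  have hcd := (commute_of_mul_zpow_mul_eq_one hc (Commute.refl d) hdΦ).symm
  refine ⟨had, hdΦ, (commute_of_mul_zpow_mul_eq_one hc hdΦ.symm (Commute.refl _)).symm, hcd,
    semiconjBy_inv_of_mul_zpow_mul_eq_one hc hdΦ.symm had (semiconjBy_mul_inv_of_mul_self ha hb),
    zpow_mul_eq_of_mul_zpow_mul_eq_one hc hcd, ?_, ?_⟩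
  · rw [hd_ea, mul_assoc, ha, mul_one]
  · rw [hd_fb, mul_assoc, hb, mul_one]

end Group

section Action

variable {G α ι : Type*} [Group G] [MulAction G α]

theorem mem_stabilizer_range_of_forall_exists {f : ι → α} {g : G}
    (h : ∀ i, ∃ j, g • f i = f j) (h' : ∀ i, ∃ j, g⁻¹ • f i = f j) :
    g ∈ stabilizer G (Set.range f) := by
  refine mem_stabilizer_set.2 fun x => ⟨?_, ?_⟩
  · rintro ⟨i, hi⟩
    obtain ⟨j, hj⟩ := h' i
    exact ⟨j, by rw [← hj, hi, inv_smul_smul]⟩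
  · rintro ⟨i, rfl⟩
    exact (h i).imp fun j hj => hj.symm

theorem orbit_subset_of_le_stabilizer {H : Subgroup G} {s : Set α} (hH : H ≤ stabilizer G s)
    {x : α} (hx : x ∈ s) : orbit H x ⊆ s := by
  rintro _ ⟨g, rfl⟩
  exact (mem_stabilizer_set.1 (hH g.2) x).2 hx

end Action

theorem finite_and_ncard_le_of_subset_image_Icc_prod {α : Type*} {f : ℤ × ℤ → α} {s : Set α}
    {M N : ℤ} (hM : 0 ≤ M) (hN : 0 ≤ N)
    (hs : s ⊆ f '' (Set.Icc 0 (M - 1) ×ˢ Set.Icc 0 (N - 1))) :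
    s.Finite ∧ (s.ncard : ℤ) ≤ M * N := by
  have hbox : (Set.Icc 0 (M - 1) ×ˢ Set.Icc 0 (N - 1)).Finite :=
    (Set.finite_Icc _ _).prod (Set.finite_Icc _ _)
  have hcard (L : ℤ) (hL : 0 ≤ L) : ((Set.Icc 0 (L - 1)).ncard : ℤ) = L := by
    rw [Set.ncard_eq_toFinset_card', Set.toFinset_Icc, Int.card_Icc]
    omega
  refine ⟨(hbox.image f).subset hs, ?_⟩
  calc (s.ncard : ℤ) ≤ (f '' (Set.Icc 0 (M - 1) ×ˢ Set.Icc 0 (N - 1))).ncard := by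
        exact_mod_cast Set.ncard_le_ncard hs (hbox.image f)
    _ ≤ (Set.Icc 0 (M - 1) ×ˢ Set.Icc 0 (N - 1)).ncard := by
        exact_mod_cast Set.ncard_image_le hbox
    _ = M * N := by rw [Set.ncard_prod, Nat.cast_mul, hcard M hM, hcard N hN]

section Orbit

variable {Q : Type*} [PaperQuandle Q] {a b c d : Q}

theorem Y_two_mul (t q : ℤ) :
    Y a b c d (2 * t) q = (ptSym c ^ q * (ptSym b * ptSym a) ^ t) d := by
  rw [Y, if_pos (even_two_mul t), Int.mul_ediv_cancel_left t two_ne_zero, Perm.mul_apply]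

theorem Y_two_mul_add_one (t q : ℤ) :
    Y a b c d (2 * t + 1) q = (ptSym c ^ q * ptSym a * (ptSym b * ptSym a) ^ t) d := by
  rw [Y, if_neg (Int.not_even_iff_odd.2 (odd_two_mul_add_one t)), add_sub_cancel_right,
    Int.mul_ediv_cancel_left t two_ne_zero]
  rfl

theorem zpow_ptSym_apply_Y (p q r : ℤ) :
    (ptSym c ^ r) (Y a b c d p q) = Y a b c d p (r + q) := by
  unfold Y
  split_ifs <;> rw [zpow_add, Perm.mul_apply]

theorem ptSym_zpow_apply_self (j : ℤ) : (ptSym d ^ j) d = d :=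
  Perm.zpow_apply_eq_self_of_apply_eq_self (PaperQuandle.fix d) j

variable {k : ℤ}

theorem Y_add_two_mul_mul_of_even
    (hshift : ∀ j, (ptSym b * ptSym a) ^ (k * j) = ptSym c ^ (-j) * ptSym d ^ (-j))
    (hcΦ : Commute (ptSym c) (ptSym b * ptSym a)) {p : ℤ} (hp : Even p) (q j : ℤ) :
    Y a b c d (p + 2 * k * j) q = Y a b c d p (q - j) := by
  obtain ⟨t, rfl⟩ := even_iff_exists_two_mul.1 hp
  have hgroup : ptSym c ^ q * (ptSym b * ptSym a) ^ (t + k * j) =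
      ptSym c ^ (q - j) * (ptSym b * ptSym a) ^ t * ptSym d ^ (-j) := by
    rw [zpow_add, hshift, ← mul_assoc (_ ^ t), ← (hcΦ.zpow_zpow (-j) t).eq, sub_eq_add_neg,
      zpow_add]
    simp only [mul_assoc]
  rw [show 2 * t + 2 * k * j = 2 * (t + k * j) by ring, Y_two_mul, Y_two_mul, hgroup,
    Perm.mul_apply, ptSym_zpow_apply_self]

theorem Y_add_two_mul_mul_of_odd
    (hshift : ∀ j, (ptSym b * ptSym a) ^ (k * j) = ptSym c ^ (-j) * ptSym d ^ (-j))
    (hcΦ : Commute (ptSym c) (ptSym b * ptSym a)) (hac : SemiconjBy (ptSym a) (ptSym c) (ptSym c)⁻¹)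
    {p : ℤ} (hp : Odd p) (q j : ℤ) :
    Y a b c d (p + 2 * k * j) q = Y a b c d p (q + j) := by
  obtain ⟨t, rfl⟩ := hp
  have hgroup : ptSym c ^ q * ptSym a * (ptSym b * ptSym a) ^ (t + k * j) =
      ptSym c ^ (q + j) * ptSym a * (ptSym b * ptSym a) ^ t * ptSym d ^ (-j) := by
    rw [zpow_add, hshift, ← mul_assoc (_ ^ t), ← (hcΦ.zpow_zpow (-j) t).eq, zpow_add]
    have := (hac.zpow_right (-j)).eq
    rw [inv_zpow', neg_neg] at this
    simp only [← mul_assoc]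
    rw [mul_assoc (ptSym c ^ q) (ptSym a), this, ← mul_assoc]
  rw [show 2 * t + 1 + 2 * k * j = 2 * (t + k * j) + 1 by ring, Y_two_mul_add_one,
    Y_two_mul_add_one, hgroup, Perm.mul_apply, ptSym_zpow_apply_self]

theorem Y_add_mul {m : ℕ} (hc : ptSym c ^ m = 1) (p q i : ℤ) :
    Y a b c d p (q + m * i) = Y a b c d p q := by
  rw [add_comm, ← zpow_ptSym_apply_Y, zpow_mul, zpow_natCast, hc, one_zpow, Perm.one_apply]

theorem Y_two_mul_rhd_a (hac : SemiconjBy (ptSym a) (ptSym c) (ptSym c)⁻¹) (t q : ℤ) :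
    Y a b c d (2 * t) q ▷ a = Y a b c d (2 * t + 1) (-q) := by
  rw [Y_two_mul, Y_two_mul_add_one]
  show (ptSym a * _) d = _
  rw [← mul_assoc, (hac.zpow_right q).eq, inv_zpow']

theorem Y_two_mul_add_one_rhd_a (ha : ptSym a * ptSym a = 1)
    (hac : SemiconjBy (ptSym a) (ptSym c) (ptSym c)⁻¹) (t q : ℤ) :
    Y a b c d (2 * t + 1) q ▷ a = Y a b c d (2 * t) (-q) := by
  rw [Y_two_mul, Y_two_mul_add_one]
  show (ptSym a * _) d = _
  rw [← mul_assoc, ← mul_assoc, (hac.zpow_right q).eq, inv_zpow']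
  simp only [mul_assoc]
  rw [← mul_assoc (ptSym a), ha, one_mul]

theorem zpow_apply_Y_two_mul (hcΦ : Commute (ptSym c) (ptSym b * ptSym a)) (s t q : ℤ) :
    ((ptSym b * ptSym a) ^ s) (Y a b c d (2 * t) q) = Y a b c d (2 * (s + t)) q := by
  rw [Y_two_mul, Y_two_mul, ← Perm.mul_apply, ← mul_assoc, ← (hcΦ.zpow_zpow q s).eq, mul_assoc,
    ← zpow_add]

theorem zpow_apply_Y_two_mul_add_one (hcΦ : Commute (ptSym c) (ptSym b * ptSym a))
    (haΦ : SemiconjBy (ptSym a) (ptSym b * ptSym a) (ptSym b * ptSym a)⁻¹) (s t q : ℤ) :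
    ((ptSym b * ptSym a) ^ s) (Y a b c d (2 * t + 1) q) = Y a b c d (2 * (t - s) + 1) q := by
  have hs := (haΦ.zpow_right (-s)).eq
  rw [inv_zpow', neg_neg] at hs
  rw [Y_two_mul_add_one, Y_two_mul_add_one, ← Perm.mul_apply]
  simp only [← mul_assoc]
  rw [← (hcΦ.zpow_zpow q s).eq, mul_assoc (_ ^ q), ← hs, sub_eq_neg_add, zpow_add]
  simp only [mul_assoc]

theorem Y_rhd_d (hcd : Commute (ptSym c) (ptSym d)) (hdΦ : Commute (ptSym d) (ptSym b * ptSym a))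
    (had : SemiconjBy (ptSym a) (ptSym d) (ptSym d)⁻¹) (p q : ℤ) :
    Y a b c d p q ▷ d = Y a b c d p q := by
  obtain ⟨t, rfl | rfl⟩ := Int.even_or_odd' p
  · rw [Y_two_mul]
    show (ptSym d * _) d = _
    rw [((hcd.symm.zpow_right q).mul_right (hdΦ.zpow_right t)).eq, Perm.mul_apply]
    exact congrArg _ (PaperQuandle.fix d)
  · have hda : ptSym d * ptSym a = ptSym a * (ptSym d)⁻¹ := by simpa using had.inv_right.eq.symm
    rw [Y_two_mul_add_one]
    show (ptSym d * _) d = _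
    rw [← mul_assoc, ← mul_assoc, (hcd.symm.zpow_right q).eq, mul_assoc _ (ptSym d), hda,
      ← mul_assoc, mul_assoc _ _ (_ ^ t), ((hdΦ.zpow_right t).inv_left).eq, ← mul_assoc,
      Perm.mul_apply]
    exact congrArg _ (Perm.inv_eq_iff_eq.2 (PaperQuandle.fix d).symm)

def rangeY (a b c d : Q) : Set Q := Set.range (Function.uncurry (Y a b c d))

theorem mem_stabilizer_rangeY {g : Perm Q}
    (h : ∀ p q, ∃ p' q', g (Y a b c d p q) = Y a b c d p' q')
    (h' : ∀ p q, ∃ p' q', g⁻¹ (Y a b c d p q) = Y a b c d p' q') :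
    g ∈ stabilizer (Perm Q) (rangeY a b c d) :=
  mem_stabilizer_range_of_forall_exists
    (fun i => let ⟨p', q', hg⟩ := h i.1 i.2; ⟨(p', q'), hg⟩)
    (fun i => let ⟨p', q', hg⟩ := h' i.1 i.2; ⟨(p', q'), hg⟩)

theorem ptSym_a_mem_stabilizer_rangeY (ha : ptSym a * ptSym a = 1)
    (hac : SemiconjBy (ptSym a) (ptSym c) (ptSym c)⁻¹) :
    ptSym a ∈ stabilizer (Perm Q) (rangeY a b c d) := by
  have hmaps : ∀ p q, ∃ p' q', ptSym a (Y a b c d p q) = Y a b c d p' q' := by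
    intro p q
    obtain ⟨t, rfl | rfl⟩ := Int.even_or_odd' p
    exacts [⟨_, _, Y_two_mul_rhd_a hac t q⟩, ⟨_, _, Y_two_mul_add_one_rhd_a ha hac t q⟩]
  exact mem_stabilizer_rangeY hmaps (inv_eq_of_mul_eq_one_right ha ▸ hmaps)

theorem zpow_mem_stabilizer_rangeY (hcΦ : Commute (ptSym c) (ptSym b * ptSym a))
    (haΦ : SemiconjBy (ptSym a) (ptSym b * ptSym a) (ptSym b * ptSym a)⁻¹) (s : ℤ) :
    (ptSym b * ptSym a) ^ s ∈ stabilizer (Perm Q) (rangeY a b c d) := by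
  have hmaps : ∀ r p q : ℤ, ∃ p' q',
      ((ptSym b * ptSym a) ^ r) (Y a b c d p q) = Y a b c d p' q' := by
    intro r p q
    obtain ⟨t, rfl | rfl⟩ := Int.even_or_odd' p
    exacts [⟨_, _, zpow_apply_Y_two_mul hcΦ r t q⟩,
      ⟨_, _, zpow_apply_Y_two_mul_add_one hcΦ haΦ r t q⟩]
  exact mem_stabilizer_rangeY (hmaps s) (zpow_neg (ptSym b * ptSym a) s ▸ hmaps (-s))

theorem ptSym_c_mem_stabilizer_rangeY : ptSym c ∈ stabilizer (Perm Q) (rangeY a b c d) := by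
  have hmaps (r : ℤ) : ∀ p q, ∃ p' q', (ptSym c ^ r) (Y a b c d p q) = Y a b c d p' q' :=
    fun p q => ⟨p, r + q, zpow_ptSym_apply_Y p q r⟩
  exact mem_stabilizer_rangeY (zpow_one (ptSym c) ▸ hmaps 1) (zpow_neg_one (ptSym c) ▸ hmaps (-1))

theorem ptSym_d_mem_stabilizer_rangeY (hcd : Commute (ptSym c) (ptSym d))
    (hdΦ : Commute (ptSym d) (ptSym b * ptSym a))
    (had : SemiconjBy (ptSym a) (ptSym d) (ptSym d)⁻¹) :
    ptSym d ∈ stabilizer (Perm Q) (rangeY a b c d) :=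
  mem_stabilizer_rangeY (fun p q => ⟨p, q, Y_rhd_d hcd hdΦ had p q⟩)
    (fun p q => ⟨p, q, Perm.inv_eq_iff_eq.2 (Y_rhd_d hcd hdΦ had p q).symm⟩)

theorem closure_le_stabilizer_rangeY {e f : Q} (ha : ptSym a * ptSym a = 1)
    (hb : ptSym b * ptSym b = 1) (he : ptSym e = ptSym d * ptSym a)
    (hf : ptSym f = ptSym d * ptSym b) (had : SemiconjBy (ptSym a) (ptSym d) (ptSym d)⁻¹)
    (hdΦ : Commute (ptSym d) (ptSym b * ptSym a)) (hcΦ : Commute (ptSym c) (ptSym b * ptSym a))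
    (hcd : Commute (ptSym c) (ptSym d)) (hac : SemiconjBy (ptSym a) (ptSym c) (ptSym c)⁻¹) :
    Subgroup.closure {ptSym a, ptSym b, ptSym c, ptSym d, ptSym e, ptSym f} ≤
      stabilizer (Perm Q) (rangeY a b c d) := by
  have hA := ptSym_a_mem_stabilizer_rangeY (b := b) (d := d) ha hac
  have hD := ptSym_d_mem_stabilizer_rangeY hcd hdΦ had
  have hB : ptSym b ∈ stabilizer (Perm Q) (rangeY a b c d) := by
    have hΦ := zpow_mem_stabilizer_rangeY (d := d) hcΦ (semiconjBy_mul_inv_of_mul_self ha hb) 1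
    rw [zpow_one] at hΦ
    simpa [mul_assoc, ha] using mul_mem hΦ hA
  rw [Subgroup.closure_le]
  simp only [Set.insert_subset_iff, Set.singleton_subset_iff, SetLike.mem_coe]
  exact ⟨hA, hB, ptSym_c_mem_stabilizer_rangeY, hD, he ▸ mul_mem hD hA, hf ▸ mul_mem hD hB⟩

theorem rhd_mem_and_rhdInv_mem_of_mem_stabilizer {S : Set Q} {u x : Q}
    (hu : ptSym u ∈ stabilizer (Perm Q) S) (hx : x ∈ S) : x ▷ u ∈ S ∧ x ▷⁻¹ u ∈ S := by
  have hS := mem_stabilizer_set.1 hu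
  refine ⟨(hS x).2 hx, (hS _).1 ?_⟩
  show x ▷⁻¹ u ▷ u ∈ S
  rwa [PaperQuandle.rhd_inv]

theorem rangeY_subset_image_Icc_prod {m : ℕ} (hk : 0 < k) (hm : 0 < m) (hc : ptSym c ^ m = 1)
    (hshift : ∀ j, (ptSym b * ptSym a) ^ (k * j) = ptSym c ^ (-j) * ptSym d ^ (-j))
    (hcΦ : Commute (ptSym c) (ptSym b * ptSym a))
    (hac : SemiconjBy (ptSym a) (ptSym c) (ptSym c)⁻¹) :
    rangeY a b c d ⊆
      Function.uncurry (Y a b c d) '' (Set.Icc 0 (2 * k - 1) ×ˢ Set.Icc 0 ((m : ℤ) - 1)) := by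
  rintro _ ⟨⟨p, q⟩, rfl⟩
  have hp : p % (2 * k) + 2 * k * (p / (2 * k)) = p := Int.emod_add_mul_ediv p (2 * k)
  obtain ⟨q', hq'⟩ : ∃ q', Y a b c d p q = Y a b c d (p % (2 * k)) q' := by
    rcases Int.even_or_odd (p % (2 * k)) with hr | hr
    · exact ⟨_, by rw [← Y_add_two_mul_mul_of_even hshift hcΦ hr, hp]⟩
    · exact ⟨_, by rw [← Y_add_two_mul_mul_of_odd hshift hcΦ hac hr, hp]⟩
  have hp_lt := Int.emod_lt_of_pos p (by omega : 0 < 2 * k)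
  have hq_lt := Int.emod_lt_of_pos q' (by omega : (0 : ℤ) < m)
  refine ⟨(p % (2 * k), q' % m), ⟨⟨Int.emod_nonneg p (by omega), by omega⟩,
    ⟨Int.emod_nonneg q' (by omega), by omega⟩⟩, ?_⟩
  rw [Function.uncurry_apply_pair, Function.uncurry_apply_pair, hq', ← Y_add_mul hc _ _ (q' / m),
    Int.emod_add_mul_ediv]

end Orbit

theorem stmt_19_general
    {Q : Type*} [PaperQuandle Q] (k : ℤ) (m : ℕ) (a b c d e f : Q)
    (hk : 1 ≤ k) (hm : 0 < m)
    (rel_a : ∀ x : Q, x ▷ a ▷ a = x)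
    (rel_b : ∀ x : Q, x ▷ b ▷ b = x)
    (rel_e : ∀ x : Q, x ▷ e ▷ e = x)
    (rel_f : ∀ x : Q, x ▷ f ▷ f = x)
    (rel_c : ∀ x : Q, (ptSym c ^ m) x = x)
    (rel_dea : ∀ x : Q, x ▷ d ▷ e ▷ a = x)
    (rel_bdf : ∀ x : Q, x ▷ b ▷ d ▷ f = x)
    (rel_cke : ∀ x : Q, (((ptSym b * ptSym a) ^ k) (x ▷ c)) ▷ a ▷ e = x) :
    (∀ p q : ℤ,
      (Even p → Y a b c d (p + 2 * k) q = Y a b c d p (q - 1)) ∧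
      (Odd p → Y a b c d (p + 2 * k) q = Y a b c d p (q + 1))) ∧
    (∀ z : Q,
      (∀ T : Set Q, d ∈ T →
        (∀ x ∈ T, ∀ u ∈ ({a, b, c, d, e, f} : Set Q), x ▷ u ∈ T ∧ x ▷⁻¹ u ∈ T) →
        z ∈ T) →
      ∃ p q : ℤ, 0 ≤ p ∧ p ≤ 2 * k - 1 ∧ 0 ≤ q ∧ q ≤ (m : ℤ) - 1 ∧
        z = Y a b c d p q) ∧
    (MulAction.orbit
      (Subgroup.closure ({ptSym a, ptSym b, ptSym c, ptSym d, ptSym e, ptSym f} :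
        Set (Equiv.Perm Q))) d).Finite ∧
    ((MulAction.orbit
      (Subgroup.closure ({ptSym a, ptSym b, ptSym c, ptSym d, ptSym e, ptSym f} :
        Set (Equiv.Perm Q))) d).ncard : ℤ) ≤ 2 * k * m := by
  have ha : ptSym a * ptSym a = 1 := Equiv.ext rel_a
  have hb : ptSym b * ptSym b = 1 := Equiv.ext rel_b
  have hbdf : ptSym f * ptSym d * ptSym b = 1 := Equiv.ext rel_bdf
  have hcke : ptSym e * ptSym a * (ptSym b * ptSym a) ^ k * ptSym c = 1 := Equiv.ext rel_cke
  obtain ⟨had, hdΦ, hcΦ, hcd, hac, hshift, he, hf⟩ := dihedral_of_graph_relations ha hb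
    (Equiv.ext rel_e) (Equiv.ext rel_f) (Equiv.ext rel_dea) hbdf hcke
  have hstab := closure_le_stabilizer_rangeY ha hb he hf had hdΦ hcΦ hcd hac
  have hbox := rangeY_subset_image_Icc_prod (by omega) hm (Equiv.ext rel_c) hshift hcΦ hac
  have hd : d ∈ rangeY a b c d := ⟨(0, 0), by simp [Y]⟩
  refine ⟨fun p q => ⟨fun hp => ?_, fun hp => ?_⟩, fun z hz => ?_, ?_⟩
  · simpa using Y_add_two_mul_mul_of_even hshift hcΦ hp q 1
  · simpa using Y_add_two_mul_mul_of_odd hshift hcΦ hac hp q 1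
  · obtain ⟨⟨p, q⟩, ⟨⟨hp₀, hp₁⟩, hq₀, hq₁⟩, rfl⟩ := hbox <| hz _ hd fun x hx u hu =>
      rhd_mem_and_rhdInv_mem_of_mem_stabilizer (hstab <| Subgroup.subset_closure <| by
        rcases hu with rfl | rfl | rfl | rfl | rfl | rfl <;> simp) hx
    exact ⟨p, q, hp₀, hp₁, hq₀, hq₁, rfl⟩
  · exact finite_and_ncard_le_of_subset_image_Icc_prod (by omega) (by omega)
      ((orbit_subset_of_le_stabilizer hstab hd).trans hbox)

theorem stmt_19
    {Q : Type*} [PaperQuandle Q] (k : ℤ) (m n : ℕ) (a b c d e f : Q)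
    (hk : 1 ≤ k) (hm : 0 < m) (hn : 0 < n)
    (rel_a : ∀ x : Q, x ▷ a ▷ a = x)
    (rel_b : ∀ x : Q, x ▷ b ▷ b = x)
    (rel_e : ∀ x : Q, x ▷ e ▷ e = x)
    (rel_f : ∀ x : Q, x ▷ f ▷ f = x)
    (rel_c : ∀ x : Q, (ptSym c ^ m) x = x)
    (rel_d : ∀ x : Q, (ptSym d ^ n) x = x)
    (rel_dea : ∀ x : Q, x ▷ d ▷ e ▷ a = x)
    (rel_bdf : ∀ x : Q, x ▷ b ▷ d ▷ f = x)
    (rel_cke : ∀ x : Q, (((ptSym b * ptSym a) ^ k) (x ▷ c)) ▷ a ▷ e = x)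
    (rel_fca : ∀ x : Q, (((ptSym b * ptSym a) ^ (k - 1)) (x ▷ f ▷ c)) ▷ a = x) :
    (∀ p q : ℤ,
      (Even p → Y a b c d (p + 2 * k) q = Y a b c d p (q - 1)) ∧
      (Odd p → Y a b c d (p + 2 * k) q = Y a b c d p (q + 1))) ∧
    (∀ z : Q,
      (∀ T : Set Q, d ∈ T →
        (∀ x ∈ T, ∀ u ∈ ({a, b, c, d, e, f} : Set Q), x ▷ u ∈ T ∧ x ▷⁻¹ u ∈ T) →
        z ∈ T) →
      ∃ p q : ℤ, 0 ≤ p ∧ p ≤ 2 * k - 1 ∧ 0 ≤ q ∧ q ≤ (m : ℤ) - 1 ∧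
        z = Y a b c d p q) ∧
    (MulAction.orbit
      (Subgroup.closure ({ptSym a, ptSym b, ptSym c, ptSym d, ptSym e, ptSym f} :
        Set (Equiv.Perm Q))) d).Finite ∧
    ((MulAction.orbit
      (Subgroup.closure ({ptSym a, ptSym b, ptSym c, ptSym d, ptSym e, ptSym f} :
        Set (Equiv.Perm Q))) d).ncard : ℤ) ≤ 2 * k * m :=
  stmt_19_general k m a b c d e f hk hm rel_a rel_b rel_e rel_f rel_c rel_dea rel_bdf rel_cke
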